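/- Let s be the sequence of ten events with timestamps 1, 2, …, 10 and labels a, b, c, b, d, a, c, b, c, d (in this order), and let the window size be ρ = 5. Let G1 be the episode on four nodes, each carrying a single event, labelled a, b, c, d, whose only edge is a proper edge from the a-node to the d-node; let G3 be the transitively closed serial episode on nodes labelled a, b, c, d with proper edges giving the total order a, b, c, d; and let G4 be the transitively closed serial episode on nodes labelled a, b, c, d with proper edges giving the total order a, c, b, d. Then fr(G1; s) = fr(G3; s) = fr(G4; s) = 2, G1 ⪯ G3, G1 ⪯ G4, G3 ⋠ G1, G4 ⋠ G1, G3 ⋠ G4, and G4 ⋠ G3. In particular, an episode may have two incomparable strict superepisodes with the same support, so no frequency-based closure operator exists for episodes. -/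

import Mathlib

/-- A sequence event: a unique id, a label (from alphabet encoded as `ℕ`),
and an integer time stamp. -/
structure SeqEvent where
  id : ℕ
  lab : ℕ
  ts : ℤ
deriving DecidableEq

/-- An event sequence: a finite collection of sequence events with distinct ids,
whose time stamps are monotone in the ids. -/
structure EventSeq where
  events : Finset SeqEvent
  id_inj : ∀ e ∈ events, ∀ f ∈ events, e.id = f.id → e = f
  ts_mono : ∀ e ∈ events, ∀ f ∈ events, e.id ≤ f.id → e.ts ≤ f.ts

/-- An episode: a finite set of episode events (identified by ids in `ℕ`) with labels,
a finite set of graph nodes, a map from events to nodes (surjectivity and the DAG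
property are recorded in `Episode.WellFormed`), and weak and proper edges. -/
structure Episode where
  events : Finset ℕ
  lab : ℕ → ℕ
  nodes : Finset ℕ
  node : ℕ → ℕ
  weak : ℕ → ℕ → Prop
  proper : ℕ → ℕ → Prop

namespace Episode

/-- An edge of the episode graph (weak or proper). -/
def edge (G : Episode) (a b : ℕ) : Prop := G.weak a b ∨ G.proper a b

/-- `G.Desc m n` : `n` is a descendant of `m`, i.e. there is a directed path from `m` to `n`. -/
def Desc (G : Episode) (m n : ℕ) : Prop := Relation.TransGen G.edge m n

/-- `G.PDesc m n` : `n` is a proper descendant of `m`, i.e. some directed path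
from `m` to `n` contains a proper edge. -/
def PDesc (G : Episode) (m n : ℕ) : Prop :=
  ∃ a b, Relation.ReflTransGen G.edge m a ∧ G.proper a b ∧ Relation.ReflTransGen G.edge b n

/-- Well-formedness of an episode: events map into the nodes, every node carries an
event, edges run between nodes, the weak and proper edges are disjoint, and the
graph is acyclic (a DAG). -/
structure WellFormed (G : Episode) : Prop where
  node_mem : ∀ e ∈ G.events, G.node e ∈ G.nodes
  node_surj : ∀ n ∈ G.nodes, ∃ e ∈ G.events, G.node e = n
  weak_mem : ∀ a b, G.weak a b → a ∈ G.nodes ∧ b ∈ G.nodes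
  proper_mem : ∀ a b, G.proper a b → a ∈ G.nodes ∧ b ∈ G.nodes
  weak_proper_disjoint : ∀ a b, G.weak a b → G.proper a b → False
  acyclic : ∀ n, ¬ G.Desc n n

/-- The transitive closure of an episode: add an edge from every node to each of its
descendants, proper if the descendant is a proper descendant, weak otherwise. -/
def tcl (G : Episode) : Episode :=
  { G with
    proper := fun a b => G.PDesc a b
    weak := fun a b => G.Desc a b ∧ ¬ G.PDesc a b }

/-- An episode is transitively closed if it coincides with its transitive closure. -/
def TransClosed (G : Episode) : Prop :=
  (∀ a b, G.proper a b ↔ G.PDesc a b) ∧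
  (∀ a b, G.weak a b ↔ (G.Desc a b ∧ ¬ G.PDesc a b))

end Episode

/-- `m` is a coverage mapping of episode `G` into sequence `s`: an injective map from
the episode events into the sequence events preserving labels, mapping events of one
node to a common time stamp, and respecting weak and proper edges. -/
def IsCoverMap (s : EventSeq) (G : Episode) (m : ℕ → SeqEvent) : Prop :=
  (∀ e ∈ G.events, m e ∈ s.events) ∧
  Set.InjOn m ↑G.events ∧
  (∀ e ∈ G.events, (m e).lab = G.lab e) ∧
  (∀ e ∈ G.events, ∀ f ∈ G.events, G.node e = G.node f → (m e).ts = (m f).ts) ∧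
  (∀ e ∈ G.events, ∀ f ∈ G.events, G.Desc (G.node f) (G.node e) → (m f).ts ≤ (m e).ts) ∧
  (∀ e ∈ G.events, ∀ f ∈ G.events, G.PDesc (G.node f) (G.node e) → (m f).ts < (m e).ts)

/-- A sequence `s` covers an episode `G`. -/
def Covers (s : EventSeq) (G : Episode) : Prop := ∃ m, IsCoverMap s G m

/-- `G ⪯ H` : every sequence covering `H` also covers `G`. -/
def Subepisode (G H : Episode) : Prop := ∀ s : EventSeq, Covers s H → Covers s G

/-- `G ∼ H` : `G ⪯ H` and `H ⪯ G`. -/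
def EpisodeSimilar (G H : Episode) : Prop := Subepisode G H ∧ Subepisode H G

/-- The window `s[i, j]`: the subsequence of events with time stamps in `[i, j]`. -/
def EventSeq.window (s : EventSeq) (i j : ℤ) : EventSeq where
  events := s.events.filter (fun e => i ≤ e.ts ∧ e.ts ≤ j)
  id_inj := fun e he f hf h =>
    s.id_inj e (Finset.mem_filter.mp he).1 f (Finset.mem_filter.mp hf).1 h
  ts_mono := fun e he f hf h =>
    s.ts_mono e (Finset.mem_filter.mp he).1 f (Finset.mem_filter.mp hf).1 h

/-- The support `fr(G; s)` with window size `ρ`: the number of integers `t` such that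
the window `s[t, t + ρ - 1]` covers `G` (as an extended natural number). -/
noncomputable def support (ρ : ℤ) (s : EventSeq) (G : Episode) : ℕ∞ :=
  {t : ℤ | Covers (s.window t (t + ρ - 1)) G}.encard

/-- `first(i)` : the smallest time stamp in the range of the instance. -/
noncomputable def instFirst (G : Episode) (m : ℕ → SeqEvent) : ℤ :=
  sInf ((fun e => (m e).ts) '' ↑G.events)

/-- `last(i)` : the largest time stamp in the range of the instance. -/
noncomputable def instLast (G : Episode) (m : ℕ → SeqEvent) : ℤ :=
  sSup ((fun e => (m e).ts) '' ↑G.events)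

/-- `m` is an instance of `G` in `s` (with window size `ρ`): a coverage mapping of `G`
into `s` such that no used sequence event can be replaced by an unused one with the same
label, the same time stamp and a smaller id, and whose span is less than `ρ`. -/
def IsInstance (ρ : ℤ) (s : EventSeq) (G : Episode) (m : ℕ → SeqEvent) : Prop :=
  IsCoverMap s G m ∧
  (∀ e ∈ G.events, ∀ f ∈ s.events, (∀ e' ∈ G.events, m e' ≠ f) →
      f.lab = (m e).lab → f.ts = (m e).ts → ¬ f.id < (m e).id) ∧
  instLast G m - instFirst G m ≤ ρ - 1

/-- Labels of the sequence `a b c b d a c b c d` (a = 0, b = 1, c = 2, d = 3),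
positions 1, …, 10. -/
def lab16 : ℕ → ℕ
  | 1 => 0 | 2 => 1 | 3 => 2 | 4 => 1 | 5 => 3
  | 6 => 0 | 7 => 2 | 8 => 1 | 9 => 2 | 10 => 3
  | _ => 0

/-- The sequence of ten events with time stamps 1, …, 10 and labels
`a b c b d a c b c d`. -/
def seq16 : EventSeq where
  events := (Finset.Icc 1 10).image (fun t => ⟨t, lab16 t, (t : ℤ)⟩)
  id_inj := by
    intro e he f hf h
    simp only [Finset.mem_image] at he hf
    obtain ⟨t, _, rfl⟩ := he
    obtain ⟨u, _, rfl⟩ := hf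
    simp only [SeqEvent.mk.injEq] at h ⊢
    simp_all
  ts_mono := by
    intro e he f hf h
    simp only [Finset.mem_image] at he hf
    obtain ⟨t, _, rfl⟩ := he
    obtain ⟨u, _, rfl⟩ := hf
    simp only [] at h ⊢
    exact_mod_cast h

/-- Episode `G1`: four nodes labelled `a, b, c, d` (each carrying one event), with a
single proper edge from the `a`-node to the `d`-node. -/
def G1ep : Episode where
  events := {0, 1, 2, 3}
  lab := id
  nodes := {0, 1, 2, 3}
  node := id
  weak := fun _ _ => False
  proper := fun x y => x = 0 ∧ y = 3

/-- Episode `G3`: the transitively closed serial episode `a → b → c → d`. -/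
def G3ep : Episode where
  events := {0, 1, 2, 3}
  lab := id
  nodes := {0, 1, 2, 3}
  node := id
  weak := fun _ _ => False
  proper := fun x y => x < y ∧ y ≤ 3

/-- The rank of the nodes in the serial order `a, c, b, d`. -/
def rank4 : ℕ → ℕ
  | 0 => 0 | 1 => 2 | 2 => 1 | 3 => 3 | _ => 4

/-- Episode `G4`: the transitively closed serial episode `a → c → b → d`. -/
def G4ep : Episode where
  events := {0, 1, 2, 3}
  lab := id
  nodes := {0, 1, 2, 3}
  node := id
  weak := fun _ _ => False
  proper := fun x y => x ≤ 3 ∧ y ≤ 3 ∧ rank4 x < rank4 y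

/-!
Every window covering `G1`, `G3` or `G4` contains an `a` strictly before a `d`. In
`a b c b d a c b c d` the only such pairs less than five apart sit at times `1, 5` and `6, 10`,
so only the windows starting at `1` and `6` can cover these episodes, and both do.
Adding edges only shrinks the set of covering sequences, so `G1 ⪯ G3` and `G1 ⪯ G4`.
The sequence `a b c d` covers `G3` but not `G4`, and `a c b d` covers `G4` but not `G3`;
as `G1` lies below both, neither `G3` nor `G4` lies below `G1`.
-/

namespace Episode

variable {G H : Episode} {a b : ℕ}

theorem pdesc_of_proper (h : G.proper a b) : G.PDesc a b :=
  ⟨a, b, .refl, h, .refl⟩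

theorem PDesc.desc (h : G.PDesc a b) : G.Desc a b := by
  obtain ⟨x, y, hax, hxy, hyb⟩ := h
  exact (Relation.TransGen.tail' hax (Or.inr hxy)).trans_left hyb

theorem desc_iff_proper [IsTrans ℕ G.proper] (hweak : ∀ a b, ¬ G.weak a b) :
    G.Desc a b ↔ G.proper a b := by
  have hedge : G.edge = G.proper := by
    ext a b
    simp [edge, hweak]
  rw [Desc, hedge, Relation.transGen_eq_self]

theorem desc_mono (hedge : ∀ a b, G.edge a b → H.edge a b) (h : G.Desc a b) : H.Desc a b :=
  Relation.TransGen.mono hedge _ _ h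

theorem pdesc_mono (hedge : ∀ a b, G.edge a b → H.edge a b)
    (hproper : ∀ a b, G.proper a b → H.proper a b) (h : G.PDesc a b) : H.PDesc a b := by
  obtain ⟨x, y, hax, hxy, hyb⟩ := h
  exact ⟨x, y, Relation.ReflTransGen.mono hedge _ _ hax, hproper x y hxy,
    Relation.ReflTransGen.mono hedge _ _ hyb⟩

end Episode

section Cover

variable {s : EventSeq} {G H : Episode} {m : ℕ → SeqEvent}

theorem isCoverMap_of_proper [IsTrans ℕ G.proper] (hnode : G.node = id)
    (hweak : ∀ a b, ¬ G.weak a b) (hmem : ∀ e ∈ G.events, m e ∈ s.events)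
    (hinj : Set.InjOn m G.events) (hlab : ∀ e ∈ G.events, (m e).lab = G.lab e)
    (hlt : ∀ e ∈ G.events, ∀ f ∈ G.events, G.proper f e → (m f).ts < (m e).ts) :
    IsCoverMap s G m := by
  refine ⟨hmem, hinj, hlab, fun e _ f _ hef => ?_, fun e he f hf hfe => ?_,
    fun e he f hf hfe => ?_⟩
  · rw [hnode] at hef
    rw [show e = f from hef]
  · rw [hnode, id, id, Episode.desc_iff_proper hweak] at hfe
    exact (hlt e he f hf hfe).le
  · rw [hnode, id, id] at hfe
    exact hlt e he f hf ((Episode.desc_iff_proper hweak).1 hfe.desc)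

theorem IsCoverMap.of_edges_le (hev : G.events = H.events) (hlab : G.lab = H.lab)
    (hnode : G.node = H.node) (hweak : ∀ a b, G.weak a b → H.weak a b)
    (hproper : ∀ a b, G.proper a b → H.proper a b) (hm : IsCoverMap s H m) :
    IsCoverMap s G m := by
  have hedge (a b : ℕ) : G.edge a b → H.edge a b := Or.imp (hweak a b) (hproper a b)
  obtain ⟨hmem, hinj, hlab', hnode', hdesc, hpdesc⟩ := hm
  simp only [IsCoverMap, hev, hlab, hnode]
  exact ⟨hmem, hinj, hlab', hnode', fun e he f hf h => hdesc e he f hf (Episode.desc_mono hedge h),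
    fun e he f hf h => hpdesc e he f hf (Episode.pdesc_mono hedge hproper h)⟩

theorem subepisode_of_edges_le (hev : G.events = H.events) (hlab : G.lab = H.lab)
    (hnode : G.node = H.node) (hweak : ∀ a b, G.weak a b → H.weak a b)
    (hproper : ∀ a b, G.proper a b → H.proper a b) : Subepisode G H :=
  fun _ ⟨m, hm⟩ => ⟨m, hm.of_edges_le hev hlab hnode hweak hproper⟩

theorem Subepisode.trans {K : Episode} (hGH : Subepisode G H) (hHK : Subepisode H K) :
    Subepisode G K :=
  fun s hs => hGH s (hHK s hs)

theorem Covers.exists_ts_lt (hs : Covers s G) {e f : ℕ} (he : e ∈ G.events) (hf : f ∈ G.events)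
    (hfe : G.PDesc (G.node f) (G.node e)) :
    ∃ x ∈ s.events, ∃ y ∈ s.events, x.lab = G.lab f ∧ y.lab = G.lab e ∧ x.ts < y.ts := by
  obtain ⟨m, hmem, -, hlab, -, -, hlt⟩ := hs
  exact ⟨m f, hmem f hf, m e, hmem e he, hlab f hf, hlab e he, hlt e he f hf hfe⟩

theorem EventSeq.mem_window {i j : ℤ} {x : SeqEvent} :
    x ∈ (s.window i j).events ↔ x ∈ s.events ∧ i ≤ x.ts ∧ x.ts ≤ j :=
  Finset.mem_filter

theorem covers_window_of_isCoverMap {i j : ℤ} (hm : IsCoverMap s G m)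
    (hts : ∀ e ∈ G.events, i ≤ (m e).ts ∧ (m e).ts ≤ j) : Covers (s.window i j) G := by
  obtain ⟨hmem, hrest⟩ := hm
  exact ⟨m, fun e he => EventSeq.mem_window.2 ⟨hmem e he, hts e he⟩, hrest⟩

end Cover

namespace EventSeq

def ofLabels (l : ℕ → ℕ) (n : ℕ) : EventSeq where
  events := (Finset.Icc 1 n).image fun t => ⟨t, l t, t⟩
  id_inj := by
    simp only [Finset.mem_image]
    rintro _ ⟨t, -, rfl⟩ _ ⟨u, -, rfl⟩ (rfl : t = u)
    rfl
  ts_mono := by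
    simp only [Finset.mem_image]
    rintro _ ⟨t, -, rfl⟩ _ ⟨u, -, rfl⟩ (htu : t ≤ u)
    exact Int.ofNat_le.2 htu

def ofList (l : List ℕ) : EventSeq :=
  ofLabels (fun t => l.getD (t - 1) 0) l.length

theorem mem_ofLabels {l : ℕ → ℕ} {n : ℕ} {x : SeqEvent} :
    x ∈ (ofLabels l n).events ↔ ∃ t ∈ Finset.Icc 1 n, ⟨t, l t, t⟩ = x :=
  Finset.mem_image

theorem isCoverMap_ofLabels {G : Episode} [IsTrans ℕ G.proper] (hnode : G.node = id)
    (hweak : ∀ a b, ¬ G.weak a b) {l : ℕ → ℕ} {n : ℕ} {τ : ℕ → ℕ}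
    (hτ : ∀ e ∈ G.events, τ e ∈ Finset.Icc 1 n ∧ l (τ e) = G.lab e)
    (hinj : ∀ e ∈ G.events, ∀ f ∈ G.events, τ e = τ f → e = f)
    (hlt : ∀ e ∈ G.events, ∀ f ∈ G.events, G.proper f e → τ f < τ e) :
    IsCoverMap (ofLabels l n) G fun e => ⟨τ e, l (τ e), τ e⟩ :=
  isCoverMap_of_proper hnode hweak (fun e he => mem_ofLabels.2 ⟨τ e, (hτ e he).1, rfl⟩)
    (fun e he f hf hef => hinj e he f hf (congrArg SeqEvent.id hef)) (fun e he => (hτ e he).2)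
    (fun e he f hf hfe => Int.ofNat_lt.2 (hlt e he f hf hfe))

end EventSeq

theorem seq16_eq_ofLabels : seq16 = EventSeq.ofLabels lab16 10 := rfl

theorem eq_one_or_six_of_covers_seq16_window {G : Episode} {t : ℤ} (h0 : 0 ∈ G.events)
    (h3 : 3 ∈ G.events) (hlab0 : G.lab 0 = 0) (hlab3 : G.lab 3 = 3)
    (hp : G.PDesc (G.node 0) (G.node 3)) (hc : Covers (seq16.window t (t + 5 - 1)) G) :
    t = 1 ∨ t = 6 := by
  obtain ⟨x, hx, y, hy, hxl, hyl, hxy⟩ := hc.exists_ts_lt h3 h0 hp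
  rw [EventSeq.mem_window, seq16_eq_ofLabels, EventSeq.mem_ofLabels] at hx hy
  obtain ⟨⟨u, hu, rfl⟩, htu, -⟩ := hx
  obtain ⟨⟨v, hv, rfl⟩, -, hvt⟩ := hy
  have close_ad_pairs : ∀ u ∈ Finset.Icc 1 10, ∀ v ∈ Finset.Icc 1 10, lab16 u = 0 →
      lab16 v = 3 → u < v → v < u + 5 → u = 1 ∧ v = 5 ∨ u = 6 ∧ v = 10 := by
    decide
  dsimp only at hxl hyl hxy htu hvt
  have := close_ad_pairs u hu v hv (hxl.trans hlab0) (hyl.trans hlab3) (by omega) (by omega)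
  omega

theorem support_seq16_eq_two {G : Episode} (h0 : 0 ∈ G.events)
    (h3 : 3 ∈ G.events) (hlab0 : G.lab 0 = 0) (hlab3 : G.lab 3 = 3)
    (hp : G.PDesc (G.node 0) (G.node 3)) (hc1 : Covers (seq16.window 1 (1 + 5 - 1)) G)
    (hc6 : Covers (seq16.window 6 (6 + 5 - 1)) G) : support 5 seq16 G = 2 := by
  have hwindows : {t : ℤ | Covers (seq16.window t (t + 5 - 1)) G} = {1, 6} := by
    ext t
    refine ⟨eq_one_or_six_of_covers_seq16_window h0 h3 hlab0 hlab3 hp, ?_⟩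
    rintro (rfl | rfl)
    exacts [hc1, hc6]
  rw [support, hwindows]
  exact Set.encard_pair (by norm_num)

instance : IsTrans ℕ G3ep.proper := ⟨fun _ _ _ hab hbc => ⟨hab.1.trans hbc.1, hbc.2⟩⟩

instance : IsTrans ℕ G4ep.proper := ⟨fun _ _ _ hab hbc => ⟨hab.1, hbc.2.1, hab.2.2.trans hbc.2.2⟩⟩

instance : DecidableRel G3ep.proper := fun a b => inferInstanceAs (Decidable (a < b ∧ b ≤ 3))

instance : DecidableRel G4ep.proper := fun a b =>
  inferInstanceAs (Decidable (a ≤ 3 ∧ b ≤ 3 ∧ rank4 a < rank4 b))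

theorem G1ep_subepisode_G3ep : Subepisode G1ep G3ep :=
  subepisode_of_edges_le rfl rfl rfl (fun _ _ => id) fun _ _ ⟨ha, hb⟩ => by subst ha hb; decide

theorem G1ep_subepisode_G4ep : Subepisode G1ep G4ep :=
  subepisode_of_edges_le rfl rfl rfl (fun _ _ => id) fun _ _ ⟨ha, hb⟩ => by subst ha hb; decide

-- The lists give the time stamps of the images of `a, b, c, d`.
theorem seq16_windows_cover_G3ep :
    Covers (seq16.window 1 (1 + 5 - 1)) G3ep ∧ Covers (seq16.window 6 (6 + 5 - 1)) G3ep :=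
  ⟨covers_window_of_isCoverMap (EventSeq.isCoverMap_ofLabels (l := lab16) (n := 10)
      (τ := ([1, 2, 3, 5].getD · 0)) rfl (fun _ _ => id) (by decide) (by decide) (by decide))
      (by decide),
    covers_window_of_isCoverMap (EventSeq.isCoverMap_ofLabels (l := lab16) (n := 10)
      (τ := ([6, 8, 9, 10].getD · 0)) rfl (fun _ _ => id) (by decide) (by decide) (by decide))
      (by decide)⟩

theorem seq16_windows_cover_G4ep :
    Covers (seq16.window 1 (1 + 5 - 1)) G4ep ∧ Covers (seq16.window 6 (6 + 5 - 1)) G4ep :=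
  ⟨covers_window_of_isCoverMap (EventSeq.isCoverMap_ofLabels (l := lab16) (n := 10)
      (τ := ([1, 4, 3, 5].getD · 0)) rfl (fun _ _ => id) (by decide) (by decide) (by decide))
      (by decide),
    covers_window_of_isCoverMap (EventSeq.isCoverMap_ofLabels (l := lab16) (n := 10)
      (τ := ([6, 8, 7, 10].getD · 0)) rfl (fun _ _ => id) (by decide) (by decide) (by decide))
      (by decide)⟩

def abcd : EventSeq := EventSeq.ofList [0, 1, 2, 3]

def acbd : EventSeq := EventSeq.ofList [0, 2, 1, 3]

theorem abcd_covers_G3ep : Covers abcd G3ep :=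
  ⟨_, EventSeq.isCoverMap_ofLabels (τ := (· + 1)) rfl (fun _ _ => id) (by decide) (by decide)
    (by decide)⟩

theorem acbd_covers_G4ep : Covers acbd G4ep :=
  ⟨_, EventSeq.isCoverMap_ofLabels (τ := ([1, 3, 2, 4].getD · 0)) rfl (fun _ _ => id)
    (by decide) (by decide) (by decide)⟩

theorem abcd_not_covers_G4ep : ¬ Covers abcd G4ep := fun hc =>
  absurd (hc.exists_ts_lt (e := 1) (f := 2) (by decide) (by decide)
    (Episode.pdesc_of_proper (by decide))) (by decide)

theorem acbd_not_covers_G3ep : ¬ Covers acbd G3ep := fun hc =>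
  absurd (hc.exists_ts_lt (e := 2) (f := 1) (by decide) (by decide)
    (Episode.pdesc_of_proper (by decide))) (by decide)

/-- with window size `ρ = 5` on the sequence `a b c b d a c b c d`,
`fr(G1) = fr(G3) = fr(G4) = 2`, `G1 ⪯ G3`, `G1 ⪯ G4`, `G3 ⋠ G1`, `G4 ⋠ G1`,
`G3 ⋠ G4` and `G4 ⋠ G3`: an episode may have two incomparable strict superepisodes
with the same support, so no frequency-based closure operator exists. -/
theorem no_frequency_closure :
    support 5 seq16 G1ep = 2 ∧ support 5 seq16 G3ep = 2 ∧ support 5 seq16 G4ep = 2 ∧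
    Subepisode G1ep G3ep ∧ Subepisode G1ep G4ep ∧
    ¬ Subepisode G3ep G1ep ∧ ¬ Subepisode G4ep G1ep ∧
    ¬ Subepisode G3ep G4ep ∧ ¬ Subepisode G4ep G3ep := by
  obtain ⟨hG3₁, hG3₆⟩ := seq16_windows_cover_G3ep
  obtain ⟨hG4₁, hG4₆⟩ := seq16_windows_cover_G4ep
  have h34 : ¬ Subepisode G3ep G4ep := fun h => acbd_not_covers_G3ep (h _ acbd_covers_G4ep)
  have h43 : ¬ Subepisode G4ep G3ep := fun h => abcd_not_covers_G4ep (h _ abcd_covers_G3ep)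
  refine ⟨?_, ?_, ?_, G1ep_subepisode_G3ep, G1ep_subepisode_G4ep,
    fun h => h34 (h.trans G1ep_subepisode_G4ep), fun h => h43 (h.trans G1ep_subepisode_G3ep),
    h34, h43⟩
  · exact support_seq16_eq_two (by decide) (by decide) rfl rfl
      (Episode.pdesc_of_proper ⟨rfl, rfl⟩) (G1ep_subepisode_G3ep _ hG3₁)
      (G1ep_subepisode_G3ep _ hG3₆)
  · exact support_seq16_eq_two (by decide) (by decide) rfl rfl
      (Episode.pdesc_of_proper (by decide)) hG3₁ hG3₆
  · exact support_seq16_eq_two (by decide) (by decide) rfl rfl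
      (Episode.pdesc_of_proper (by decide)) hG4₁ hG4₆
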